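/- If Φ is true, then no state with status UNSAT is reachable from the initial state via the transition rules of basic Incremental Determinization together with the rules InductiveRefinement and Failed. -/

import Mathlib

/-! Basic framework: variables are `X ⊕ Y` where `X` are the universal and
`Y` the existential variables (this makes `X` and `Y` disjoint by construction). -/

/-- A literal: a variable together with a polarity. -/
abbrev Lit (X Y : Type) := (X ⊕ Y) × Bool

/-- A clause is a finite set of literals. -/
abbrev Clause (X Y : Type) := Finset (Lit X Y)

/-- A (total) assignment to all variables. Assignments "to a set `D` of variables"
are modelled as total assignments; all notions below only inspect the relevant variables. -/
abbrev Assn (X Y : Type) := (X ⊕ Y) → Bool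

/-- An assignment satisfies a literal if it maps its variable to its polarity. -/
def satLit {X Y : Type} (σ : Assn X Y) (l : Lit X Y) : Prop := σ l.1 = l.2

/-- An assignment satisfies a clause if it satisfies at least one of its literals. -/
def satClause {X Y : Type} (σ : Assn X Y) (c : Clause X Y) : Prop := ∃ l ∈ c, satLit σ l

/-- An assignment satisfies a clause set if it satisfies every clause in it. -/
def satCnf {X Y : Type} (σ : Assn X Y) (ψ : Set (Clause X Y)) : Prop := ∀ c ∈ ψ, satClause σ c

/-- The combined assignment `(xa, ya)`. -/
def combine {X Y : Type} (xa : X → Bool) (ya : Y → Bool) : Assn X Y := Sum.elim xa ya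

/-- The restriction of an assignment to the universal variables `X`. -/
def restrX {X Y : Type} (σ : Assn X Y) : X → Bool := fun x => σ (Sum.inl x)

/-- Truth of the 2QBF `∀X.∃Y.φ`: there is a Skolem function `f` such that for every
assignment `xa` to `X` the combined assignment `(xa, f(xa))` satisfies `φ`. -/
def qbfTrue {X Y : Type} (φ : Set (Clause X Y)) : Prop :=
  ∃ f : (X → Bool) → (Y → Bool), ∀ xa : X → Bool, satCnf (combine xa (f xa)) φ

/-- `v` has a unique Skolem function for domain `χ` in `ψ`: for every assignment `xa` to `X`
satisfying `χ` there is exactly one Boolean `b` such that some assignment `ya` to the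
existential variables with `ya v = b` makes `(xa, ya)` satisfy `ψ`. -/
def uniqueSkolem {X Y : Type} (ψ : Set (Clause X Y)) (χ : (X → Bool) → Prop) (v : Y) : Prop :=
  ∀ xa : X → Bool, χ xa →
    ∃! b : Bool, ∃ ya : Y → Bool, ya v = b ∧ satCnf (combine xa ya) ψ

/-- `C|_D`: the clauses of `C` all of whose variables lie in `D`. -/
def restrictC {X Y : Type} (C : Set (Clause X Y)) (D : Set (X ⊕ Y)) : Set (Clause X Y) :=
  {c ∈ C | ∀ l ∈ c, l.1 ∈ D}

/-- Clause `c` has unique consequence `v` relative to `D`: it contains a literal of `v`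
and all its other literals are of variables in `D`. -/
def hasUC {X Y : Type} (c : Clause X Y) (v : Y) (D : Set (X ⊕ Y)) : Prop :=
  (∃ b : Bool, (Sum.inr v, b) ∈ c) ∧ ∀ l ∈ c, l.1 ≠ Sum.inr v → l.1 ∈ D

/-- `U_v`: the clauses of `C` with unique consequence `v` relative to `D`. -/
def UC {X Y : Type} (C : Set (Clause X Y)) (v : Y) (D : Set (X ⊕ Y)) : Set (Clause X Y) :=
  {c ∈ C | hasUC c v D}

/-- `A_(v,b)`: some clause `c` in `U_v` contains the literal `(v, b)` and the assignment
falsifies every literal of `c` other than the literals of `v`. -/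
def Ant {X Y : Type} (C : Set (Clause X Y)) (v : Y) (D : Set (X ⊕ Y)) (b : Bool)
    (σ : Assn X Y) : Prop :=
  ∃ c ∈ UC C v D, (Sum.inr v, b) ∈ c ∧ ∀ l ∈ c, l.1 ≠ Sum.inr v → ¬ satLit σ l

/-- `deterministic(v, C, χ, D)`. -/
def deterministic {X Y : Type} (v : Y) (C : Set (Clause X Y)) (χ : (X → Bool) → Prop)
    (D : Set (X ⊕ Y)) : Prop :=
  ∀ σ : Assn X Y, satCnf σ (restrictC C D) → χ (restrX σ) →
    Ant C v D true σ ∨ Ant C v D false σ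

/-- `unconflicted(v, C, χ, D)`. -/
def unconflicted {X Y : Type} (v : Y) (C : Set (Clause X Y)) (χ : (X → Bool) → Prop)
    (D : Set (X ⊕ Y)) : Prop :=
  ∀ σ : Assn X Y, satCnf σ (restrictC C D) → χ (restrX σ) →
    ¬ (Ant C v D true σ ∧ Ant C v D false σ)

/-- `v` has a unique Skolem function relative to `D` for domain `χ` in `C`: for every
assignment to `D` satisfying `C|_D` whose restriction to `X` satisfies `χ`, there is exactly
one Boolean `b` such that extending the assignment by `v ↦ b` satisfies every clause of `U_v`. -/
def uniqueSkolemRel {X Y : Type} [DecidableEq X] [DecidableEq Y] (v : Y)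
    (C : Set (Clause X Y)) (χ : (X → Bool) → Prop) (D : Set (X ⊕ Y)) : Prop :=
  ∀ σ : Assn X Y, satCnf σ (restrictC C D) → χ (restrX σ) →
    ∃! b : Bool, satCnf (Function.update σ (Sum.inr v) b) (UC C v D)

/-! The state of the Incremental Determinization solver. -/

/-- The solver status. -/
inductive Status (X Y : Type) where
  | ready : Status X Y
  | conflict (L : Clause X Y) (d : Assn X Y) : Status X Y
  | sat : Status X Y
  | unsat : Status X Y

/-- A solver state `(S, C, D, χ, α)`: a status, a stack of clause sets, a stack of sets of
variables, and two predicates on assignments to `X`. -/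
structure IDState (X Y : Type) where
  status : Status X Y
  C : List (Set (Clause X Y))
  D : List (Set (X ⊕ Y))
  chi : (X → Bool) → Prop
  alpha : (X → Bool) → Prop

/-- The union of the elements of a stack of sets. -/
def stackUnion {β : Type} (S : List (Set β)) : Set β := {x | ∃ s ∈ S, x ∈ s}

/-- The first element (index 0) of a stack of sets. -/
def first {β : Type} (S : List (Set β)) : Set β := S.getD 0 ∅

/-- Add an element to the last set of a stack. -/
def addLast {β : Type} : List (Set β) → β → List (Set β)
  | [], v => [{v}]
  | [s], v => [insert v s]
  | s :: t :: rest, v => s :: addLast (t :: rest) v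

/-- Add an element to the first set of a stack. -/
def addFirst {β : Type} : List (Set β) → β → List (Set β)
  | [], x => [{x}]
  | s :: rest, x => insert x s :: rest

/-- The initial state `(Ready, ⟨φ⟩, ⟨X⟩, ⊤, ⊤)`. -/
def initState {X Y : Type} (φ : Set (Clause X Y)) : IDState X Y :=
  ⟨Status.ready, [φ], [Set.range Sum.inl], fun _ => True, fun _ => True⟩

/-- Basic Incremental Determinization extended by the rules InductiveRefinement and Failed. -/
inductive StepIRF {X Y : Type} [DecidableEq X] [DecidableEq Y] (φ : Set (Clause X Y)) :
    IDState X Y → IDState X Y → Prop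

  | propagate (C : List (Set (Clause X Y))) (D : List (Set (X ⊕ Y)))
      (χ α : (X → Bool) → Prop) (v : Y)
      (hv : Sum.inr v ∉ stackUnion D)
      (hdet : deterministic v (stackUnion C) (fun xa => χ xa ∧ α xa) (stackUnion D))
      (hunc : unconflicted v (stackUnion C) (fun xa => χ xa ∧ α xa) (stackUnion D)) :
      StepIRF φ ⟨Status.ready, C, D, χ, α⟩ ⟨Status.ready, C, addLast D (Sum.inr v), χ, α⟩
  | decide (C : List (Set (Clause X Y))) (D : List (Set (X ⊕ Y)))
      (χ α : (X → Bool) → Prop) (v : Y) (δ : Set (Clause X Y))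
      (hv : Sum.inr v ∉ stackUnion D) (hδfin : δ.Finite)
      (hδ : ∀ c ∈ δ, hasUC c v (stackUnion D)) :
      StepIRF φ ⟨Status.ready, C, D, χ, α⟩ ⟨Status.ready, C ++ [δ], D ++ [∅], χ, α⟩
  | sat (C : List (Set (Clause X Y))) (D : List (Set (X ⊕ Y)))
      (χ : (X → Bool) → Prop)
      (hD : stackUnion D = Set.univ) :
      StepIRF φ ⟨Status.ready, C, D, χ, fun _ => True⟩ ⟨Status.sat, C, D, χ, fun _ => True⟩
  | conflict (C : List (Set (Clause X Y))) (D : List (Set (X ⊕ Y)))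
      (χ α : (X → Bool) → Prop) (v : Y) (σ : Assn X Y)
      (hv : Sum.inr v ∉ stackUnion D)
      (hsat : satCnf σ (restrictC (stackUnion C) (stackUnion D)))
      (hχ : χ (restrX σ)) (hα : α (restrX σ))
      (ht : Ant (stackUnion C) v (stackUnion D) true σ)
      (hf : Ant (stackUnion C) v (stackUnion D) false σ) :
      StepIRF φ ⟨Status.ready, C, D, χ, α⟩
        ⟨Status.conflict {(Sum.inr v, true), (Sum.inr v, false)} σ, C, D, χ, α⟩
  | analyze (C : List (Set (Clause X Y))) (D : List (Set (X ⊕ Y)))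
      (χ α : (X → Bool) → Prop) (L : Clause X Y) (σ : Assn X Y)
      (c : Clause X Y) (l : Lit X Y)
      (hc : c ∈ first C) (hl : l ∈ L) (hlc : (l.1, !l.2) ∈ c) :
      StepIRF φ ⟨Status.conflict L σ, C, D, χ, α⟩
        ⟨Status.conflict (L.erase l ∪ c.erase (l.1, !l.2)) σ, C, D, χ, α⟩
  | learn (C : List (Set (Clause X Y))) (D : List (Set (X ⊕ Y)))
      (χ α : (X → Bool) → Prop) (L : Clause X Y) (σ : Assn X Y)
      (h : ∃ l ∈ L, l.1 ∉ stackUnion D) :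
      StepIRF φ ⟨Status.conflict L σ, C, D, χ, α⟩ ⟨Status.ready, addFirst C L, D, χ, α⟩
  | unsat (C : List (Set (Clause X Y))) (D : List (Set (X ⊕ Y)))
      (χ α : (X → Bool) → Prop) (L : Clause X Y) (σ : Assn X Y)
      (hvars : ∀ l ∈ L, l.1 ∈ first D)
      (hfals : ∀ l ∈ L, ¬ satLit σ l) :
      StepIRF φ ⟨Status.conflict L σ, C, D, χ, α⟩ ⟨Status.unsat, C, D, χ, α⟩
  | backtrack (S : Status X Y) (C : List (Set (Clause X Y))) (D : List (Set (X ⊕ Y)))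
      (χ α : (X → Bool) → Prop) (k : ℕ) (h0 : 0 < k) (hk : k ≤ C.length) :
      StepIRF φ ⟨S, C, D, χ, α⟩ ⟨S, C.take k, D.take k, χ, α⟩
  | inductiveRefinement (C : List (Set (Clause X Y))) (D : List (Set (X ⊕ Y)))
      (χ α : (X → Bool) → Prop) (L : Clause X Y) (σ : Assn X Y) (ya : Y → Bool)
      (h : satCnf (combine (restrX σ) ya) φ) :
      StepIRF φ ⟨Status.conflict L σ, C, D, χ, α⟩
        ⟨Status.conflict L σ, C, D, fun xa => χ xa ∧ ¬ satCnf (combine xa ya) φ, α⟩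
  | failed (C : List (Set (Clause X Y))) (D : List (Set (X ⊕ Y)))
      (χ α : (X → Bool) → Prop) (L : Clause X Y) (σ : Assn X Y)
      (h : ∀ ya : Y → Bool, ¬ satCnf (combine (restrX σ) ya) φ) :
      StepIRF φ ⟨Status.conflict L σ, C, D, χ, α⟩ ⟨Status.unsat, C, D, χ, α⟩

/-- Reachability from the initial state via basic ID plus InductiveRefinement and Failed. -/
def ReachableIRF {X Y : Type} [DecidableEq X] [DecidableEq Y] (φ : Set (Clause X Y))
    (s : IDState X Y) : Prop :=
  Relation.ReflTransGen (StepIRF φ) (initState φ) s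

/-! Fix a Skolem function `f` witnessing the truth of `Φ`. Along every run, `f` satisfies all
clauses of level 0 (learned clauses are implied by them), and every variable of level 0 takes the
value prescribed by `f` on all assignments satisfying the level-0 clauses within `χ`: for a
propagated variable, an assignment and its `f`-completion fire the same antecedent, and
unconflictedness forces both to its polarity. Conflict analysis only resolves against level-0
clauses, so a conflict clause is satisfied by every `f`-completion, and the conflict assignment
agrees with its `f`-completion on level 0. Hence `Unsat` cannot find the conflict clause falsified,
and `Failed` would contradict `f` directly. -/

open Set

variable {X Y : Type}

lemma satCnf_mono {σ : Assn X Y} {ψ ψ' : Set (Clause X Y)} (h : ψ ⊆ ψ') (hs : satCnf σ ψ') :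
    satCnf σ ψ :=
  fun c hc => hs c (h hc)

lemma restrictC_mono {C C' : Set (Clause X Y)} {D D' : Set (X ⊕ Y)} (hC : C ⊆ C') (hD : D ⊆ D') :
    restrictC C D ⊆ restrictC C' D' :=
  fun _ hc => ⟨hC hc.1, fun l hl => hD (hc.2 l hl)⟩

lemma restrictC_subset (C : Set (Clause X Y)) (D : Set (X ⊕ Y)) : restrictC C D ⊆ C :=
  fun _ hc => hc.1

lemma UC_subset (C : Set (Clause X Y)) (v : Y) (D : Set (X ⊕ Y)) : UC C v D ⊆ C :=
  fun _ hc => hc.1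

lemma UC_subset_restrictC_insert (C : Set (Clause X Y)) (v : Y) (D : Set (X ⊕ Y)) :
    UC C v D ⊆ restrictC C (insert (Sum.inr v) D) := by
  refine fun c hc => ⟨hc.1, fun l hl => ?_⟩
  by_cases h : l.1 = Sum.inr v
  · exact h ▸ mem_insert _ _
  · exact mem_insert_of_mem _ (hc.2.2 l hl h)

lemma satClause_resolvent [DecidableEq X] [DecidableEq Y] {σ : Assn X Y} {L c : Clause X Y}
    {l : Lit X Y} (hlc : (l.1, !l.2) ∈ c) (hL : satClause σ L) (hc : satClause σ c) :
    satClause σ (L.erase l ∪ c.erase (l.1, !l.2)) := by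
  obtain ⟨m, hm, hσm⟩ := hL
  by_cases hml : m = l
  · obtain ⟨m', hm', hσm'⟩ := hc
    have hne : m' ≠ (l.1, !l.2) := by
      rintro rfl
      subst hml
      have hσm : σ m.1 = m.2 := hσm
      simp [satLit, hσm] at hσm'
    exact ⟨m', Finset.mem_union_right _ (Finset.mem_erase.mpr ⟨hne, hm'⟩), hσm'⟩
  · exact ⟨m, Finset.mem_union_left _ (Finset.mem_erase.mpr ⟨hml, hm⟩), hσm⟩

section Antecedents

variable {C : Set (Clause X Y)} {v : Y} {D : Set (X ⊕ Y)} {b : Bool} {σ : Assn X Y}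

lemma Ant.congr {σ' : Assn X Y} (h : Ant C v D b σ) (hσ : EqOn σ σ' D) : Ant C v D b σ' := by
  obtain ⟨c, hcU, hvc, hfalse⟩ := h
  refine ⟨c, hcU, hvc, fun l hl hlv hσ'l => hfalse l hl hlv ?_⟩
  exact (hσ (hcU.2.2 l hl hlv)).trans hσ'l

/-- A clause of `U_v` whose other literals are falsified can only be satisfied through `v`. -/
lemma Ant.self_of_satCnf (h : Ant C v D b σ) (hσ : satCnf σ (UC C v D)) :
    Ant C v D (σ (Sum.inr v)) σ := by
  obtain ⟨c, hcU, hvc, hfalse⟩ := h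
  obtain ⟨⟨w, p⟩, hwc, hσw⟩ := hσ c hcU
  by_cases hwv : w = Sum.inr v
  · subst hwv
    exact ⟨c, hcU, (hσw : σ (Sum.inr v) = p) ▸ hwc, hfalse⟩
  · exact absurd hσw (hfalse _ hwc hwv)

lemma unconflicted.eq_of_ant {χ : (X → Bool) → Prop} {b' : Bool} (hunc : unconflicted v C χ D)
    (hσ : satCnf σ (restrictC C D)) (hχ : χ (restrX σ)) (h : Ant C v D b σ)
    (h' : Ant C v D b' σ) : b = b' := by
  cases b <;> cases b'
  · rfl
  · exact (hunc σ hσ hχ ⟨h', h⟩).elim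
  · exact (hunc σ hσ hχ ⟨h, h'⟩).elim
  · rfl

lemma unconflicted.apply_eq_of_ant {χ : (X → Bool) → Prop} (hunc : unconflicted v C χ D)
    (hσ : satCnf σ (restrictC C D)) (hχ : χ (restrX σ)) (h : Ant C v D b σ)
    (hU : satCnf σ (UC C v D)) : σ (Sum.inr v) = b :=
  (hunc.eq_of_ant hσ hχ h (h.self_of_satCnf hU)).symm

end Antecedents

section Stacks

variable {β : Type}

lemma first_subset_stackUnion {S : List (Set β)} (h : S ≠ []) : first S ⊆ stackUnion S := by
  cases S with
  | nil => exact absurd rfl h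
  | cons s S => exact fun x hx => ⟨s, List.mem_cons_self, hx⟩

lemma stackUnion_singleton (s : Set β) : stackUnion [s] = s := by
  ext x
  simp [stackUnion]

lemma first_append {S : List (Set β)} (h : S ≠ []) (T : List (Set β)) :
    first (S ++ T) = first S := by
  cases S with
  | nil => exact absurd rfl h
  | cons s S => rfl

lemma first_take {S : List (Set β)} {k : ℕ} (hk : 0 < k) : first (S.take k) = first S := by
  obtain ⟨k, rfl⟩ := Nat.exists_eq_add_one_of_ne_zero hk.ne'
  cases S <;> rfl

lemma length_addLast : ∀ (S : List (Set β)) (x : β), S ≠ [] → (addLast S x).length = S.length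
  | [_], _, _ => rfl
  | _ :: t :: S, x, _ => congrArg Nat.succ (length_addLast (t :: S) x (List.cons_ne_nil _ _))

end Stacks

def skolemCompletion (f : (X → Bool) → Y → Bool) (σ : Assn X Y) : Assn X Y :=
  combine (restrX σ) (f (restrX σ))

structure SkolemInv (f : (X → Bool) → Y → Bool) (C : List (Set (Clause X Y)))
    (D : List (Set (X ⊕ Y))) (χ α : (X → Bool) → Prop) : Prop where
  D_ne_nil : D ≠ []
  length_eq : C.length = D.length
  alpha_true : ∀ xa, α xa
  skolem_sat : ∀ xa, satCnf (combine xa (f xa)) (first C)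
  eqOn_first : ∀ σ : Assn X Y, satCnf σ (restrictC (first C) (first D)) → χ (restrX σ) →
    EqOn σ (skolemCompletion f σ) (first D)

def StatusInv (f : (X → Bool) → Y → Bool) (C₀ : Set (Clause X Y)) (D₀ : Set (X ⊕ Y)) :
    Status X Y → Prop
  | .conflict L σ => (∀ σ', satCnf σ' C₀ → satClause σ' L) ∧ EqOn σ (skolemCompletion f σ) D₀
  | .unsat => False
  | _ => True

def SoundState (f : (X → Bool) → Y → Bool) (s : IDState X Y) : Prop :=
  SkolemInv f s.C s.D s.chi s.alpha ∧ StatusInv f (first s.C) (first s.D) s.status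

section Invariant

variable {f : (X → Bool) → Y → Bool} {C : List (Set (Clause X Y))} {D : List (Set (X ⊕ Y))}
  {χ α : (X → Bool) → Prop}

lemma skolemInv_init (φ : Set (Clause X Y)) (hf : ∀ xa, satCnf (combine xa (f xa)) φ) :
    SkolemInv f [φ] [range Sum.inl] (fun _ => True) (fun _ => True) where
  D_ne_nil := List.cons_ne_nil _ _
  length_eq := rfl
  alpha_true _ := trivial
  skolem_sat := hf
  eqOn_first := by
    rintro σ - - _ ⟨x, rfl⟩
    rfl

namespace SkolemInv

lemma C_ne_nil (h : SkolemInv f C D χ α) : C ≠ [] :=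
  List.ne_nil_of_length_pos (h.length_eq ▸ List.length_pos_of_ne_nil h.D_ne_nil)

lemma eqOn_insert_of_propagate {C₀ : Set (Clause X Y)} {D₀ : Set (X ⊕ Y)} {v : Y}
    (h : SkolemInv f [C₀] [D₀] χ α)
    (hdet : deterministic v C₀ (fun xa => χ xa ∧ α xa) D₀)
    (hunc : unconflicted v C₀ (fun xa => χ xa ∧ α xa) D₀) {σ : Assn X Y}
    (hσ : satCnf σ (restrictC C₀ (insert (Sum.inr v) D₀))) (hχ : χ (restrX σ)) :
    EqOn σ (skolemCompletion f σ) (insert (Sum.inr v) D₀) := by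
  have hσ₀ : satCnf σ (restrictC C₀ D₀) :=
    satCnf_mono (restrictC_mono subset_rfl (subset_insert _ _)) hσ
  have hagree : EqOn σ (skolemCompletion f σ) D₀ := h.eqOn_first σ hσ₀ hχ
  have hχα : χ (restrX σ) ∧ α (restrX σ) := ⟨hχ, h.alpha_true _⟩
  have hτ : satCnf (skolemCompletion f σ) C₀ := h.skolem_sat _
  obtain ⟨b, hb⟩ : ∃ b, Ant C₀ v D₀ b σ :=
    (hdet σ hσ₀ hχα).elim (⟨true, ·⟩) (⟨false, ·⟩)
  rintro w (rfl | hw)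
  · rw [hunc.apply_eq_of_ant hσ₀ hχα hb (satCnf_mono (UC_subset_restrictC_insert _ _ _) hσ),
      hunc.apply_eq_of_ant (satCnf_mono (restrictC_subset _ _) hτ) hχα (hb.congr hagree)
        (satCnf_mono (UC_subset _ _ _) hτ)]
  · exact hagree hw

lemma of_first_eq (h : SkolemInv f C D χ α) {C' : List (Set (Clause X Y))}
    {D' : List (Set (X ⊕ Y))} (hD' : D' ≠ []) (hlen : C'.length = D'.length)
    (hC : first C' = first C) (hD : first D' = first D) : SkolemInv f C' D' χ α where
  D_ne_nil := hD'
  length_eq := hlen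
  alpha_true := h.alpha_true
  skolem_sat := hC ▸ h.skolem_sat
  eqOn_first := hC ▸ hD ▸ h.eqOn_first

lemma propagate (h : SkolemInv f C D χ α) {v : Y}
    (hdet : deterministic v (stackUnion C) (fun xa => χ xa ∧ α xa) (stackUnion D))
    (hunc : unconflicted v (stackUnion C) (fun xa => χ xa ∧ α xa) (stackUnion D)) :
    SkolemInv f C (addLast D (Sum.inr v)) χ α := by
  obtain ⟨d, D, rfl⟩ := List.exists_cons_of_ne_nil h.D_ne_nil
  rcases D with _ | ⟨d', D⟩
  · obtain ⟨c, rfl⟩ : ∃ c, C = [c] := List.length_eq_one_iff.mp h.length_eq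
    rw [stackUnion_singleton, stackUnion_singleton] at hdet hunc
    exact { h with
      D_ne_nil := List.cons_ne_nil _ _
      eqOn_first := fun σ hσ hχ => h.eqOn_insert_of_propagate hdet hunc hσ hχ }
  · exact h.of_first_eq (List.cons_ne_nil _ _)
      (h.length_eq.trans (length_addLast _ _ (List.cons_ne_nil _ _)).symm) rfl rfl

lemma append (h : SkolemInv f C D χ α) (δ : Set (Clause X Y)) (d : Set (X ⊕ Y)) :
    SkolemInv f (C ++ [δ]) (D ++ [d]) χ α :=
  h.of_first_eq (by simp) (by simp [h.length_eq]) (first_append h.C_ne_nil _)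
    (first_append h.D_ne_nil _)

lemma take (h : SkolemInv f C D χ α) {k : ℕ} (hk : 0 < k) :
    SkolemInv f (C.take k) (D.take k) χ α :=
  h.of_first_eq (by simpa using ⟨hk.ne', h.D_ne_nil⟩) (by simp [h.length_eq]) (first_take hk)
    (first_take hk)

lemma learn (h : SkolemInv f C D χ α) {L : Clause X Y}
    (hL : ∀ σ, satCnf σ (first C) → satClause σ L) : SkolemInv f (addFirst C L) D χ α := by
  obtain ⟨c, C, rfl⟩ := List.exists_cons_of_ne_nil h.C_ne_nil
  refine { h with skolem_sat := fun xa => ?_, eqOn_first := fun σ hσ hχ => ?_ }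
  · rintro c' (rfl | hc')
    exacts [hL _ (h.skolem_sat xa), h.skolem_sat xa c' hc']
  · exact h.eqOn_first σ (satCnf_mono (restrictC_mono (subset_insert _ _) subset_rfl) hσ) hχ

lemma restrict_chi (h : SkolemInv f C D χ α) {χ' : (X → Bool) → Prop}
    (hχ : ∀ xa, χ' xa → χ xa) : SkolemInv f C D χ' α :=
  { h with eqOn_first := fun σ hσ hσχ => h.eqOn_first σ hσ (hχ _ hσχ) }

lemma statusInv_conflict [DecidableEq X] [DecidableEq Y] (h : SkolemInv f C D χ α) {v : Y}
    {σ : Assn X Y}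
    (hσ : satCnf σ (restrictC (stackUnion C) (stackUnion D))) (hχ : χ (restrX σ)) :
    StatusInv f (first C) (first D) (.conflict {((Sum.inr v : X ⊕ Y), true), (Sum.inr v, false)} σ) := by
  refine ⟨fun σ' _ => ?_, h.eqOn_first σ (satCnf_mono (restrictC_mono
    (first_subset_stackUnion h.C_ne_nil) (first_subset_stackUnion h.D_ne_nil)) hσ) hχ⟩
  exact ⟨(Sum.inr v, σ' (Sum.inr v)), by cases σ' (Sum.inr v) <;> simp, rfl⟩

end SkolemInv

lemma StatusInv.resolve [DecidableEq X] [DecidableEq Y] {C₀ : Set (Clause X Y)}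
    {D₀ : Set (X ⊕ Y)} {L c : Clause X Y} {l : Lit X Y} {σ : Assn X Y}
    (h : StatusInv f C₀ D₀ (.conflict L σ)) (hc : c ∈ C₀) (hlc : (l.1, !l.2) ∈ c) :
    StatusInv f C₀ D₀ (.conflict (L.erase l ∪ c.erase (l.1, !l.2)) σ) :=
  ⟨fun σ' hσ' => satClause_resolvent hlc (h.1 σ' hσ') (hσ' c hc), h.2⟩

lemma StatusInv.exists_satLit {C₀ : Set (Clause X Y)} {D₀ : Set (X ⊕ Y)} {L : Clause X Y}
    {σ : Assn X Y} (hf : ∀ xa, satCnf (combine xa (f xa)) C₀)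
    (h : StatusInv f C₀ D₀ (.conflict L σ)) (hL : ∀ l ∈ L, l.1 ∈ D₀) : ∃ l ∈ L, satLit σ l := by
  obtain ⟨l, hl, hτl⟩ := h.1 _ (hf (restrX σ))
  exact ⟨l, hl, (h.2 (hL l hl)).trans hτl⟩

lemma SoundState.step [DecidableEq X] [DecidableEq Y] {φ : Set (Clause X Y)}
    (hf : ∀ xa, satCnf (combine xa (f xa)) φ) {s t : IDState X Y} (hst : StepIRF φ s t)
    (hs : SoundState f s) : SoundState f t := by
  obtain ⟨hinv, hstatus⟩ := hs
  cases hst with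
  | propagate C D χ α v _ hdet hunc => exact ⟨hinv.propagate hdet hunc, trivial⟩
  | decide C D χ α v δ => exact ⟨hinv.append δ ∅, trivial⟩
  | sat => exact ⟨hinv, trivial⟩
  | conflict C D χ α v σ _ hσ hχ => exact ⟨hinv, hinv.statusInv_conflict hσ hχ⟩
  | analyze C D χ α L σ c l hc _ hlc => exact ⟨hinv, hstatus.resolve hc hlc⟩
  | learn => exact ⟨hinv.learn hstatus.1, trivial⟩
  | unsat C D χ α L σ hL hfalse =>
    obtain ⟨l, hl, hσl⟩ := hstatus.exists_satLit hinv.skolem_sat hL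
    exact (hfalse l hl hσl).elim
  | backtrack S C D χ α k hk =>
    exact ⟨hinv.take hk, by rwa [first_take hk, first_take hk]⟩
  | inductiveRefinement => exact ⟨hinv.restrict_chi fun _ => And.left, hstatus⟩
  | failed C D χ α L σ hfail => exact (hfail _ (hf _)).elim

lemma SoundState.of_reachable [DecidableEq X] [DecidableEq Y] {φ : Set (Clause X Y)}
    (hf : ∀ xa, satCnf (combine xa (f xa)) φ) {s : IDState X Y} (hs : ReachableIRF φ s) :
    SoundState f s := by
  induction hs with
  | refl => exact ⟨skolemInv_init φ hf, trivial⟩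
  | tail _ hst ih => exact ih.step hf hst

end Invariant

theorem stmt_12_general {X Y : Type} [DecidableEq X] [DecidableEq Y]
    (φ : Set (Clause X Y)) (htrue : qbfTrue φ) :
    ¬ ∃ s : IDState X Y, ReachableIRF φ s ∧ s.status = Status.unsat := by
  rintro ⟨s, hs, hunsat⟩
  obtain ⟨f, hf⟩ := htrue
  have hstatus := (SoundState.of_reachable hf hs).2
  rw [hunsat] at hstatus
  exact hstatus

/-- If Φ is true, no state with status UNSAT is reachable via basic ID plus
InductiveRefinement and Failed. -/
theorem stmt_12 {X Y : Type} [Fintype X] [Fintype Y] [DecidableEq X] [DecidableEq Y]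
    (φ : Set (Clause X Y)) (hφfin : φ.Finite)
    (hφY : ∀ c ∈ φ, ∃ l ∈ c, ∃ y : Y, l.1 = Sum.inr y)
    (htrue : qbfTrue φ) :
    ¬ ∃ s : IDState X Y, ReachableIRF φ s ∧ s.status = Status.unsat :=
  stmt_12_general φ htrue
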